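/- For each m ≥ 2 let P_m ∈ ℝ[X] be a polynomial satisfying P_m·D_m = Q_m. Then P₂(2) < 0, P₃(2) > 0, and for every m ≥ 4 one has (−1)^m·P_m(2) > 0 and (−1)^{m+1}·(P_{m+1}(2) + P_m(2)) > 0. -/

import Mathlib

open Function

noncomputable section

/-- The polynomial map `f(x) = x(5-x)`. -/
def f (x : ℝ) : ℝ := x * (5 - x)

/-- `l(x) = x - 6`. -/
def lf (x : ℝ) : ℝ := x - 6

/-- `s(x) = (2-x)(4-x)(5-x) - (14-3x)`. -/
def sf (x : ℝ) : ℝ := (2 - x) * (4 - x) * (5 - x) - (14 - 3 * x)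

/-- `r(x) = -2(2-x)(5-x)`. -/
def rf (x : ℝ) : ℝ := -2 * (2 - x) * (5 - x)

/-- The decreasing inverse branch of `f`. -/
def phim (x : ℝ) : ℝ := (5 - Real.sqrt (25 - 4 * x)) / 2

/-- The increasing inverse branch of `f`. -/
def phip (x : ℝ) : ℝ := (5 + Real.sqrt (25 - 4 * x)) / 2

/-- `q m` is the function `q_m` from the paper, meaningful for `m ≥ 2`
(the values at `m = 0, 1` are junk values `1`, never used in the statements). -/
def q : ℕ → ℝ → ℝ
  | 0, _ => 1
  | 1, _ => 1
  | 2, x => sf x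
  | 3, x => sf (f x) * sf x - rf (f x) * lf x
  | m + 4, x =>
      sf (f^[m + 2] x) * q (m + 3) x - rf (f^[m + 2] x) * lf (f^[m + 1] x) * q (m + 2) x

open Polynomial

/-- The polynomial `F = 5X - X²`. -/
def F : ℝ[X] := C 5 * X - X ^ 2

/-- `Fiter i` is the `i`-fold composition `F^{(i)}`, with `Fiter 0 = X`. -/
def Fiter : ℕ → ℝ[X]
  | 0 => X
  | i + 1 => F.comp (Fiter i)

/-- Polynomial version of `l`. -/
def Lp : ℝ[X] := X - C 6

/-- Polynomial version of `s`. -/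
def Sp : ℝ[X] := (C 2 - X) * (C 4 - X) * (C 5 - X) - (C 14 - C 3 * X)

/-- Polynomial version of `r`. -/
def Rp : ℝ[X] := -C 2 * (C 2 - X) * (C 5 - X)

/-- `Qp m` is the polynomial `Q_m`, satisfying `(Qp m).eval x = q_m x`,
defined by the same recursion as `q_m`; meaningful for `m ≥ 2`. -/
def Qp : ℕ → ℝ[X]
  | 0 => 1
  | 1 => 1
  | 2 => Sp
  | 3 => Sp.comp (Fiter 1) * Sp - Rp.comp (Fiter 1) * Lp
  | m + 4 =>
      Sp.comp (Fiter (m + 2)) * Qp (m + 3) -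
        Rp.comp (Fiter (m + 2)) * Lp.comp (Fiter (m + 1)) * Qp (m + 2)

/-- `Dp m = ∏_{i=0}^{m-3} (F^{(i)} - 2)`, with `Dp 2 = 1`. -/
def Dp (m : ℕ) : ℝ[X] := ∏ i ∈ Finset.range (m - 2), (Fiter i - C 2)

/-- `r_m = 2^m + 2^{m-2} - 2`. -/
def rm (m : ℕ) : ℕ := 2 ^ m + 2 ^ (m - 2) - 2
/-! At `x = 2` both `Q_m` (`m ≥ 3`) and `D_m` vanish, the latter simply, so that
`P_m(2) D_m'(2) = Q_m'(2)`. Along the orbit `a_i = f^{(i)}(2)`, which is `2, 6, -6, -66, …` and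
stays below `-6` from `i = 2` on, `D_{m+1}'(2) = D_m'(2) (a_{m-2} - 2)`; hence `D_m'(2)` has the
sign `(-1)^m`. The values `Q_m'(2)` satisfy the three-term recurrence of the `q_m` with coefficients
taken along the orbit, and since `s` dominates there the invariant
`Q_{m+1}'(2) > (2 - a_{m-2}) Q_m'(2) > 0` propagates. It gives the sign of `P_m(2)` and, through
`(P_{m+1}(2) + P_m(2)) D_{m+1}'(2) = Q_{m+1}'(2) + (a_{m-2} - 2) Q_m'(2)`, that of the sum. -/

theorem Polynomial.eval_mul_eval_derivative_of_mul_eq {R : Type*} [CommRing R]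
    {p d q : R[X]} {x : R} (h : p * d = q) (hd : d.IsRoot x) :
    p.eval x * (derivative d).eval x = (derivative q).eval x := by
  rw [← h, derivative_mul, eval_add, eval_mul, eval_mul, hd.eq_zero, mul_zero, zero_add]

theorem pos_and_mul_lt_of_three_term_rec {K : Type*} [CommRing K] [LinearOrder K]
    [IsStrictOrderedRing K] {x σ ρ c : ℕ → K}
    (hrec : ∀ n, x (n + 2) = σ n * x (n + 1) - ρ n * x n) (hc : ∀ n, 0 ≤ c n)
    (hσ : ∀ n, c (n + 1) < σ n) (hρ : ∀ n, ρ n ≤ (σ n - c (n + 1)) * c n)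
    (h0 : 0 < x 0) (h1 : c 0 * x 0 < x 1) (n : ℕ) : 0 < x n ∧ c n * x n < x (n + 1) := by
  induction n with
  | zero => exact ⟨h0, h1⟩
  | succ n ih =>
    obtain ⟨hpos, hlt⟩ := ih
    refine ⟨by nlinarith [hc n], ?_⟩
    have hgap := mul_lt_mul_of_pos_left hlt (sub_pos.2 (hσ n))
    have hρx := mul_le_mul_of_nonneg_right (hρ n) hpos.le
    rw [hrec]
    nlinarith

theorem neg_one_pow_mul_pos_of_mul_eq {K : Type*} [CommRing K] [LinearOrder K]
    [IsStrictOrderedRing K] {x d q : K} (m : ℕ) (h : x * d = q) (hq : 0 < q)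
    (hd : 0 < (-1) ^ m * d) : 0 < (-1) ^ m * x := by
  refine pos_of_mul_pos_left ?_ hd.le
  calc 0 < q := hq
    _ = ((-1) ^ m * x) * ((-1) ^ m * d) := by rw [← h, ← mul_mul_mul_comm, ← mul_pow]; simp

theorem f_le_self {x : ℝ} (hx : x ≤ 0) : f x ≤ x := by
  unfold f; nlinarith

theorem iterate_f_two_le (k : ℕ) : f^[k + 2] 2 ≤ -6 := by
  induction k with
  | zero => norm_num [f]
  | succ k ih =>
    rw [iterate_succ_apply']
    exact (f_le_self (by linarith)).trans ih

theorem eval_F (x : ℝ) : F.eval x = f x := by simp [F, f]; ring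

theorem eval_Fiter (i : ℕ) (x : ℝ) : (Fiter i).eval x = f^[i] x := by
  induction i with
  | zero => simp [Fiter]
  | succ i ih => rw [Fiter, eval_comp, ih, eval_F, iterate_succ_apply']

theorem sf_sub_two_add_pos {u v : ℝ} (hvu : v ≤ u) (hv : v ≤ 0) : 0 < sf v - 2 + u := by
  unfold sf; nlinarith [pow_nonneg (neg_nonneg.2 hv) 3]

theorem rf_mul_lf_le {b u v : ℝ} (hb : b ≤ -6) (hvu : v ≤ u) (hv : v ≤ 0) :
    rf v * lf u ≤ (sf v - 2 + u) * (2 - b) := by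
  have hpos := sf_sub_two_add_pos hvu hv
  calc rf v * lf u = 2 * ((2 - v) * (5 - v)) * (6 - u) := by unfold rf lf; ring
    _ ≤ 2 * ((2 - v) * (5 - v)) * (6 - v) := by gcongr; nlinarith
    _ ≤ (sf v - 2 + v) * 8 := by
      unfold sf; nlinarith [pow_nonneg (neg_nonneg.2 hv) 3]
    _ ≤ (sf v - 2 + u) * (2 - b) := by nlinarith

theorem eval_Sp (x : ℝ) : Sp.eval x = sf x := by simp [Sp, sf]

theorem eval_Rp (x : ℝ) : Rp.eval x = rf x := by simp [Rp, rf]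

theorem eval_Lp (x : ℝ) : Lp.eval x = lf x := by simp [Lp, lf]

theorem Fiter_one : Fiter 1 = F := comp_X

theorem Qp_three : Qp 3 = Sp.comp F * Sp - Rp.comp F * Lp := by rw [← Fiter_one]; rfl

theorem Qp_add_four (k : ℕ) : Qp (k + 4) =
    Sp.comp (Fiter (k + 2)) * Qp (k + 3) -
      Rp.comp (Fiter (k + 2)) * Lp.comp (Fiter (k + 1)) * Qp (k + 2) := rfl

theorem isRoot_Qp_two : ∀ k : ℕ, (Qp (k + 3)).IsRoot 2
  | 0 => by
    rw [IsRoot, Qp_three]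
    norm_num [eval_comp, eval_Sp, eval_Rp, eval_Lp, eval_F, f, sf, rf, lf]
  | 1 => by
    -- `Q_2(2) ≠ 0`, but it comes with the factor `l(f(2)) = l(6) = 0`
    rw [IsRoot, Qp_add_four]
    norm_num [(isRoot_Qp_two 0).eq_zero, eval_comp, eval_Lp, eval_Fiter, f, lf]
  | k + 2 => by
    rw [IsRoot, Qp_add_four]
    simp [(isRoot_Qp_two k).eq_zero, (isRoot_Qp_two (k + 1)).eq_zero]

theorem eval_derivative_Qp_add_five (k : ℕ) : (derivative (Qp (k + 5))).eval 2 =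
    sf (f^[k + 3] 2) * (derivative (Qp (k + 4))).eval 2 -
      rf (f^[k + 3] 2) * lf (f^[k + 2] 2) * (derivative (Qp (k + 3))).eval 2 := by
  rw [Qp_add_four (k + 1)]
  simp only [derivative_sub, derivative_mul, eval_sub, eval_add, eval_mul, eval_comp, eval_Sp,
    eval_Rp, eval_Lp, eval_Fiter, (isRoot_Qp_two k).eq_zero, (isRoot_Qp_two (k + 1)).eq_zero]
  ring

theorem eval_derivative_F (x : ℝ) : (derivative F).eval x = 5 - 2 * x := by simp [F]; norm_num

theorem eval_derivative_Sp (x : ℝ) : (derivative Sp).eval x = -3 * x ^ 2 + 22 * x - 35 := by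
  simp [Sp]; ring

theorem eval_derivative_Rp (x : ℝ) : (derivative Rp).eval x = 14 - 4 * x := by simp [Rp]; ring

theorem eval_derivative_Lp (x : ℝ) : (derivative Lp).eval x = 1 := by simp [Lp]

theorem eval_derivative_Qp_three : (derivative (Qp 3)).eval 2 = 68 := by
  rw [Qp_three]
  simp only [derivative_sub, derivative_mul, derivative_comp, eval_sub, eval_add, eval_mul,
    eval_comp, eval_Sp, eval_Rp, eval_Lp, eval_F, eval_derivative_Sp, eval_derivative_Rp,
    eval_derivative_Lp, eval_derivative_F]
  norm_num [f, sf, rf, lf]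

theorem eval_derivative_Qp_four : (derivative (Qp 4)).eval 2 = 56256 := by
  rw [Qp_add_four 0]
  simp only [derivative_sub, derivative_mul, derivative_comp, eval_sub, eval_add, eval_mul,
    eval_comp, eval_Sp, eval_Rp, eval_Lp, eval_Fiter, eval_derivative_Rp, eval_derivative_Lp,
    (isRoot_Qp_two 0).eq_zero]
  rw [eval_derivative_Qp_three, Fiter_one, eval_derivative_F, show Qp 2 = Sp from rfl, eval_Sp]
  norm_num [f, sf, rf, lf]

theorem eval_derivative_Qp_five : (derivative (Qp 5)).eval 2 = 18992472192 := by
  rw [eval_derivative_Qp_add_five 0, eval_derivative_Qp_four, eval_derivative_Qp_three]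
  norm_num [f, sf, rf, lf]

theorem eval_derivative_Qp_pos_and_lt (k : ℕ) : 0 < (derivative (Qp (k + 4))).eval 2 ∧
    (2 - f^[k + 2] 2) * (derivative (Qp (k + 4))).eval 2 < (derivative (Qp (k + 5))).eval 2 := by
  have hle (n : ℕ) : f^[n + 2] 2 ≤ -6 := iterate_f_two_le n
  have hsucc (n : ℕ) : f^[n + 3] 2 ≤ f^[n + 2] 2 := by
    rw [iterate_succ_apply']; exact f_le_self (by linarith [hle n])
  refine pos_and_mul_lt_of_three_term_rec (x := fun n ↦ (derivative (Qp (n + 4))).eval 2)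
    (σ := fun n ↦ sf (f^[n + 4] 2)) (ρ := fun n ↦ rf (f^[n + 4] 2) * lf (f^[n + 3] 2))
    (c := fun n ↦ 2 - f^[n + 2] 2) (fun n ↦ eval_derivative_Qp_add_five (n + 1))
    (fun n ↦ by linarith [hle n]) (fun n ↦ ?_) (fun n ↦ ?_) ?_ ?_ k
  · have := sf_sub_two_add_pos (hsucc (n + 1)) (by linarith [hle (n + 2)])
    linarith
  · have := rf_mul_lf_le (hle n) (hsucc (n + 1)) (by linarith [hle (n + 2)])
    linarith
  · norm_num [eval_derivative_Qp_four]
  · norm_num [eval_derivative_Qp_four, eval_derivative_Qp_five, f]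

theorem Dp_three : Dp 3 = X - C 2 := by simp [Dp, Fiter]

theorem Dp_add_four (k : ℕ) : Dp (k + 4) = Dp (k + 3) * (Fiter (k + 1) - C 2) :=
  Finset.prod_range_succ _ _

theorem isRoot_Dp_two (k : ℕ) : (Dp (k + 3)).IsRoot 2 := by
  induction k with
  | zero => simp [Dp_three]
  | succ k ih => simp [Dp_add_four, ih.eq_zero]

theorem eval_derivative_Dp_add_four (k : ℕ) :
    (derivative (Dp (k + 4))).eval 2 = (derivative (Dp (k + 3))).eval 2 * (f^[k + 1] 2 - 2) := by
  rw [Dp_add_four, derivative_mul, eval_add, eval_mul, eval_mul, (isRoot_Dp_two k).eq_zero,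
    zero_mul, add_zero, eval_sub, eval_C, eval_Fiter]

theorem neg_one_pow_mul_eval_derivative_Dp_pos (k : ℕ) :
    0 < (-1 : ℝ) ^ (k + 4) * (derivative (Dp (k + 4))).eval 2 := by
  induction k with
  | zero => simp [eval_derivative_Dp_add_four, Dp_three, f]; norm_num
  | succ k ih =>
    rw [eval_derivative_Dp_add_four, pow_succ]
    nlinarith [iterate_f_two_le k]

theorem statement_15 (P : ℕ → ℝ[X]) (hP : ∀ m : ℕ, 2 ≤ m → P m * Dp m = Qp m) :
    (P 2).eval 2 < 0 ∧ 0 < (P 3).eval 2 ∧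
    ∀ m : ℕ, 4 ≤ m →
      0 < (-1 : ℝ) ^ m * (P m).eval 2 ∧
      0 < (-1 : ℝ) ^ (m + 1) * ((P (m + 1)).eval 2 + (P m).eval 2) := by
  have hPQ (k : ℕ) : (P (k + 3)).eval 2 * (derivative (Dp (k + 3))).eval 2 =
      (derivative (Qp (k + 3))).eval 2 :=
    eval_mul_eval_derivative_of_mul_eq (hP (k + 3) (by omega)) (isRoot_Dp_two k)
  refine ⟨?_, ?_, fun m hm ↦ ?_⟩
  · have h2 : P 2 = Qp 2 := by simpa [Dp] using hP 2 le_rfl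
    norm_num [h2, Qp, eval_Sp, sf]
  · have h3 : (P 3).eval 2 = 68 := by simpa [Dp_three, eval_derivative_Qp_three] using hPQ 0
    norm_num [h3]
  obtain ⟨k, rfl⟩ : ∃ k, m = k + 4 := ⟨m - 4, by omega⟩
  obtain ⟨hpos, hlt⟩ := eval_derivative_Qp_pos_and_lt k
  refine ⟨neg_one_pow_mul_pos_of_mul_eq _ (hPQ (k + 1)) hpos
    (neg_one_pow_mul_eval_derivative_Dp_pos k), ?_⟩
  have hsum : ((P (k + 5)).eval 2 + (P (k + 4)).eval 2) * (derivative (Dp (k + 5))).eval 2 =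
      (derivative (Qp (k + 5))).eval 2 +
        (f^[k + 2] 2 - 2) * (derivative (Qp (k + 4))).eval 2 := by
    linear_combination hPQ (k + 2) + (f^[k + 2] 2 - 2) * hPQ (k + 1) +
      (P (k + 4)).eval 2 * eval_derivative_Dp_add_four (k + 1)
  exact neg_one_pow_mul_pos_of_mul_eq _ hsum (by linarith)
    (neg_one_pow_mul_eval_derivative_Dp_pos (k + 1))
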